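/- arXiv:2505.04817 — 5 statements merged into one kernel-verified Lean document; each statement's English description precedes it below -/
import Mathlib

section
/- Let C be a category and I an idealoid of C (a class of morphisms closed under pre- and post-composition with arbitrary morphisms). If I is subdivisible (every f in I factors as g ∘ h with both g, h in I), then any morphism f : C(0) → C(1) in I can be refined to a functor C : (ℚ ∩ [0,1]) → C (viewing the poset as a category) such that for all a < b in ℚ ∩ [0,1], the morphism C(a) → C(b) lies in I, and C(0) → C(1) agrees with f. -/
open CategoryTheory

/-- An idealoid of a category: a class of morphisms closed under pre- and post-composition
with arbitrary morphisms. -/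
def IsIdealoid {C : Type*} [Category C] (I : MorphismProperty C) : Prop :=
  ∀ ⦃W X Y Z : C⦄ (h : W ⟶ X) (f : X ⟶ Y) (g : Y ⟶ Z), I f → I (h ≫ f ≫ g)

/-- A subdivisible idealoid: every member factors as a composite of two members. -/
def IsSubdivisible {C : Type*} [Category C] (I : MorphismProperty C) : Prop :=
  ∀ ⦃X Y : C⦄ (f : X ⟶ Y), I f → ∃ (Z : C) (h : X ⟶ Z) (g : Z ⟶ Y), I h ∧ I g ∧ h ≫ g = f

/-- The poset `ℚ ∩ [0,1]`, viewed as a category. -/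
abbrev QIcc : Type := Set.Icc (0 : ℚ) 1

def qzero : QIcc := ⟨0, by norm_num⟩
def qone : QIcc := ⟨1, by norm_num⟩

lemma qzero_le_qone : qzero ≤ qone := Subtype.mk_le_mk.mpr zero_le_one

namespace SubAux

structure Setup (C : Type*) [Category C] where
  I : MorphismProperty C
  hI : IsIdealoid I
  hsub : IsSubdivisible I
  X : C
  Y : C
  f : X ⟶ Y
  hf : I f

variable {C : Type*} [Category C]

open Classical in
noncomputable def midF (S : Setup C) {A B : C} (g : A ⟶ B) : Σ (Z : C), (A ⟶ Z) × (Z ⟶ B) :=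
  if h : S.I g then
    ⟨(S.hsub _ h).choose, (S.hsub _ h).choose_spec.choose,
      (S.hsub _ h).choose_spec.choose_spec.choose⟩
  else ⟨A, 𝟙 _, g⟩

lemma midF_comp (S : Setup C) {A B : C} (g : A ⟶ B) : (midF S g).2.1 ≫ (midF S g).2.2 = g := by
  by_cases h : S.I g
  · rw [midF, dif_pos h]
    exact (S.hsub _ h).choose_spec.choose_spec.choose_spec.2.2
  · rw [midF, dif_neg h]
    simp

lemma midF_mem (S : Setup C) {A B : C} (g : A ⟶ B) (h : S.I g) :
    S.I (midF S g).2.1 ∧ S.I (midF S g).2.2 := by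
  rw [midF, dif_pos h]
  exact ⟨(S.hsub _ h).choose_spec.choose_spec.choose_spec.1,
    (S.hsub _ h).choose_spec.choose_spec.choose_spec.2.1⟩

noncomputable def lv (S : Setup C) : ℕ → Σ (Ob : ℕ → C), ∀ k, Ob k ⟶ Ob (k + 1)
  | 0 =>
    ⟨fun k => Nat.rec S.X (fun _ _ => S.Y) k,
     fun k => Nat.rec (motive := fun k =>
        (Nat.rec S.X (fun _ _ => S.Y) k : C) ⟶ (Nat.rec S.X (fun _ _ => S.Y) (k + 1) : C))
        S.f (fun _ _ => 𝟙 S.Y) k⟩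
  | n + 1 =>
    ⟨fun m => if m % 2 = 0 then (lv S n).1 (m / 2) else (midF S ((lv S n).2 (m / 2))).1,
     fun m =>
       if h : m % 2 = 0 then
         eqToHom (if_pos h) ≫ (midF S ((lv S n).2 (m / 2))).2.1 ≫
           eqToHom (by
             beta_reduce
             have h1 : (m + 1) % 2 ≠ 0 := by omega
             have h2 : (m + 1) / 2 = m / 2 := by omega
             rw [if_neg h1, h2])
       else
         eqToHom (if_neg h) ≫ (midF S ((lv S n).2 (m / 2))).2.2 ≫
           eqToHom (by
             beta_reduce
             have h1 : (m + 1) % 2 = 0 := by omega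
             have h2 : (m + 1) / 2 = m / 2 + 1 := by omega
             rw [if_pos h1, h2])⟩

noncomputable def Ob (S : Setup C) (n k : ℕ) : C := (lv S n).1 k

noncomputable def St (S : Setup C) (n k : ℕ) : Ob S n k ⟶ Ob S n (k + 1) := (lv S n).2 k

example (S : Setup C) : Ob S 0 0 = S.X := rfl
example (S : Setup C) (k : ℕ) : Ob S 0 (k+1) = S.Y := rfl
example (S : Setup C) : St S 0 0 = S.f := rfl
example (S : Setup C) (k : ℕ) : St S 0 (k+1) = 𝟙 S.Y := rfl


lemma Ob_even (S : Setup C) {n m : ℕ} (h : m % 2 = 0) : Ob S (n + 1) m = Ob S n (m / 2) := by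
  simp only [Ob, lv]
  rw [if_pos h]

lemma Ob_odd (S : Setup C) {n m : ℕ} (h : ¬ m % 2 = 0) :
    Ob S (n + 1) m = (midF S (St S n (m / 2))).1 := by
  simp only [Ob, St, lv]
  rw [if_neg h]

lemma heq_conj {A A' B B' : C} (p : A' = A) (p' : B = B') (g : A ⟶ B) :
    HEq (eqToHom p ≫ g ≫ eqToHom p') g := by
  subst p; subst p'
  exact heq_of_eq (by simp)

lemma St_even (S : Setup C) {n m : ℕ} (h : m % 2 = 0) :
    HEq (St S (n + 1) m) (midF S (St S n (m / 2))).2.1 := by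
  simp only [St, Ob, lv]
  rw [dif_pos h]
  exact heq_conj _ _ _

lemma St_odd (S : Setup C) {n m : ℕ} (h : ¬ m % 2 = 0) :
    HEq (St S (n + 1) m) (midF S (St S n (m / 2))).2.2 := by
  simp only [St, Ob, lv]
  rw [dif_neg h]
  exact heq_conj _ _ _

lemma mem_of_heq (S : Setup C) {A B A' B' : C} (hA : A = A') (hB : B = B')
    {g : A ⟶ B} {g' : A' ⟶ B'} (h : HEq g g') (hg : S.I g) : S.I g' := by
  subst hA; subst hB
  rwa [← eq_of_heq h]

lemma comp_mem (S : Setup C) {A B D : C} {g : A ⟶ B} {g' : B ⟶ D} (h : S.I g') :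
    S.I (g ≫ g') := by
  simpa using S.hI g g' (𝟙 _) h

lemma comp_mem' (S : Setup C) {A B D : C} {g : A ⟶ B} {g' : B ⟶ D} (h : S.I g) :
    S.I (g ≫ g') := by
  simpa using S.hI (𝟙 _) g g' h

lemma St_mem (S : Setup C) : ∀ n k, k < 2 ^ n → S.I (St S n k) := by
  intro n
  induction n with
  | zero =>
    intro k hk
    interval_cases k
    exact S.hf
  | succ n ih =>
    intro m hm
    have hk : m / 2 < 2 ^ n := by
      have : 2 ^ (n + 1) = 2 * 2 ^ n := by ring
      omega
    have hI' := ih (m / 2) hk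
    have hmemb := midF_mem S _ hI'
    by_cases h : m % 2 = 0
    · have e2 : Ob S (n + 1) (m + 1) = (midF S (St S n (m / 2))).1 := by
        rw [Ob_odd S (show ¬ (m+1) % 2 = 0 by omega), show (m+1)/2 = m/2 by omega]
      exact mem_of_heq S (Ob_even S h).symm e2.symm (St_even S h).symm hmemb.1
    · have e2 : Ob S (n + 1) (m + 1) = Ob S n (m / 2 + 1) := by
        rw [Ob_even S (show (m+1) % 2 = 0 by omega), show (m+1)/2 = m/2 + 1 by omega]
      exact mem_of_heq S (Ob_odd S h).symm e2.symm (St_odd S h).symm hmemb.2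


lemma Ob_dbl (S : Setup C) (n k : ℕ) : Ob S (n + 1) (2 * k) = Ob S n k := by
  rw [Ob_even S (by omega), show 2 * k / 2 = k by omega]

lemma Ob_dbl1 (S : Setup C) (n k : ℕ) :
    Ob S (n + 1) (2 * k + 1) = (midF S (St S n k)).1 := by
  rw [Ob_odd S (by omega), show (2 * k + 1) / 2 = k by omega]

lemma comp2 (S : Setup C) (n k : ℕ) :
    HEq (St S (n + 1) (2 * k) ≫ St S (n + 1) (2 * k + 1)) (St S n k) := by
  have h1 := St_even S (n := n) (m := 2 * k) (by omega)
  rw [show 2 * k / 2 = k by omega] at h1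
  have h2 := St_odd S (n := n) (m := 2 * k + 1) (by omega)
  rw [show (2 * k + 1) / 2 = k by omega] at h2
  have e3 : Ob S (n + 1) (2 * k + 1 + 1) = Ob S n (k + 1) := by
    rw [show 2 * k + 1 + 1 = 2 * (k + 1) by ring, Ob_dbl]
  exact (heq_comp (Ob_dbl S n k) (Ob_dbl1 S n k) e3 h1 h2).trans
    (heq_of_eq (midF_comp S _))

lemma comp2' (S : Setup C) (n k a : ℕ) (ha : a = 2 * k) :
    HEq (St S (n + 1) a ≫ St S (n + 1) (a + 1)) (St S n k) := by
  subst ha; exact comp2 S n k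

noncomputable def cpath (S : Setup C) (n i : ℕ) : (t : ℕ) → (Ob S n i ⟶ Ob S n (i + t))
  | 0 => 𝟙 _
  | t + 1 => cpath S n i t ≫ St S n (i + t)

lemma cpath_mem (S : Setup C) (n i t : ℕ) (ht : 1 ≤ t) (hb : i + t ≤ 2 ^ n) :
    S.I (cpath S n i t) := by
  match t with
  | t + 1 =>
    show S.I (cpath S n i t ≫ St S n (i + t))
    exact comp_mem S (St_mem S n (i + t) (by omega))

lemma cpath_add (S : Setup C) (n i a : ℕ) :
    ∀ b, HEq (cpath S n i (a + b)) (cpath S n i a ≫ cpath S n (i + a) b)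
  | 0 => heq_of_eq (by simp [cpath])
  | b + 1 => by
    have H := cpath_add S n i a b
    have hobj : Ob S n (i + (a + b)) = Ob S n (i + a + b) := by rw [Nat.add_assoc]
    have hobj2 : Ob S n (i + (a + b) + 1) = Ob S n (i + a + b + 1) := by congr 1; omega
    have hst : HEq (St S n (i + (a + b))) (St S n (i + a + b)) :=
      congr_arg_heq (St S n) (by omega)
    exact (heq_comp rfl hobj hobj2 H hst).trans (heq_of_eq (Category.assoc _ _ _))

lemma cpath_dbl (S : Setup C) (n i : ℕ) :
    ∀ t, HEq (cpath S (n + 1) (2 * i) (2 * t)) (cpath S n i t)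
  | 0 => by
    show HEq (𝟙 (Ob S (n + 1) (2 * i))) (𝟙 (Ob S n i))
    rw [Ob_dbl S n i]
  | t + 1 => by
    have IH := cpath_dbl S n i t
    have hY : Ob S (n + 1) (2 * i + 2 * t) = Ob S n (i + t) := by
      rw [show 2 * i + 2 * t = 2 * (i + t) by ring, Ob_dbl]
    have hZ : Ob S (n + 1) (2 * i + (2 * t + 1) + 1) = Ob S n (i + t + 1) := by
      rw [show 2 * i + (2 * t + 1) + 1 = 2 * (i + t + 1) by ring, Ob_dbl]
    have hcomp : HEq (St S (n + 1) (2 * i + 2 * t) ≫ St S (n + 1) ((2 * i + 2 * t) + 1))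
        (St S n (i + t)) := comp2' S n (i + t) _ (by ring)
    show HEq ((cpath S (n + 1) (2 * i) (2 * t) ≫ St S (n + 1) (2 * i + 2 * t)) ≫
        St S (n + 1) (2 * i + (2 * t + 1)))
      (cpath S n i t ≫ St S n (i + t))
    exact (heq_of_eq (Category.assoc _ _ _)).trans
      (heq_comp (Ob_dbl S n i) hY hZ IH hcomp)


lemma cpath_congr (S : Setup C) {n i t n' i' t' : ℕ} (hn : n = n') (hi : i = i')
    (ht : t = t') : HEq (cpath S n i t) (cpath S n' i' t') := by
  subst hn; subst hi; subst ht; rfl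

lemma lift_eq (S : Setup C) : ∀ (j n k : ℕ), Ob S (n + j) (2 ^ j * k) = Ob S n k
  | 0, n, k => by rw [show 2 ^ 0 * k = k by ring]; rfl
  | j + 1, n, k => by
    rw [show 2 ^ (j + 1) * k = 2 * (2 ^ j * k) by ring]
    rw [show n + (j + 1) = (n + j) + 1 by omega]
    rw [Ob_dbl S (n + j) (2 ^ j * k)]
    exact lift_eq S j n k

lemma endEq (S : Setup C) (n k m l : ℕ) (h : 2 ^ m * k ≤ 2 ^ n * l) :
    Ob S (n + m) (2 ^ m * k + (2 ^ n * l - 2 ^ m * k)) = Ob S m l := by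
  rw [Nat.add_sub_cancel' h, show n + m = m + n by omega]
  exact lift_eq S n m l

noncomputable def homP (S : Setup C) (n k m l : ℕ) (h : 2 ^ m * k ≤ 2 ^ n * l) :
    Ob S n k ⟶ Ob S m l :=
  eqToHom (lift_eq S m n k).symm ≫ cpath S (n + m) (2 ^ m * k) (2 ^ n * l - 2 ^ m * k) ≫
    eqToHom (endEq S n k m l h)

lemma homP_eq_cpath (S : Setup C) :
    ∀ (j n k m l : ℕ) (h : 2 ^ m * k ≤ 2 ^ n * l),
      HEq (homP S n k m l h)
        (cpath S (n + m + j) (2 ^ (m + j) * k) (2 ^ (n + j) * l - 2 ^ (m + j) * k))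
  | 0, n, k, m, l, h => by
    unfold homP
    exact heq_conj _ _ _
  | j + 1, n, k, m, l, h => by
    have IH := homP_eq_cpath S j n k m l h
    refine IH.trans ?_
    have h2 : (2 : ℕ) ^ (m + (j + 1)) * k = 2 * (2 ^ (m + j) * k) := by ring
    have h3 : 2 ^ (n + (j + 1)) * l - 2 ^ (m + (j + 1)) * k
        = 2 * (2 ^ (n + j) * l - 2 ^ (m + j) * k) := by
      have e1 : (2 : ℕ) ^ (n + (j + 1)) * l = 2 * (2 ^ (n + j) * l) := by ring
      omega
    exact ((cpath_dbl S (n + m + j) (2 ^ (m + j) * k)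
      (2 ^ (n + j) * l - 2 ^ (m + j) * k)).symm).trans
      (cpath_congr S rfl h2.symm h3.symm)

lemma homP_id (S : Setup C) (n k : ℕ) (h : 2 ^ n * k ≤ 2 ^ n * k) :
    homP S n k n k h = 𝟙 (Ob S n k) := by
  have H := homP_eq_cpath S 0 n k n k h
  have H2 := cpath_congr S (n := n + n + 0) (i := 2 ^ (n + 0) * k) rfl rfl
    (show 2 ^ (n + 0) * k - 2 ^ (n + 0) * k = 0 by omega)
  have hO : Ob S (n + n + 0) (2 ^ (n + 0) * k) = Ob S n k := by
    rw [show n + n + 0 = n + n by omega]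
    exact lift_eq S n n k
  have H3 : HEq (𝟙 (Ob S (n + n + 0) (2 ^ (n + 0) * k))) (𝟙 (Ob S n k)) := by rw [hO]
  exact eq_of_heq ((H.trans H2).trans H3)

lemma homP_mem (S : Setup C) (n k m l : ℕ) (h : 2 ^ m * k ≤ 2 ^ n * l)
    (hlt : 2 ^ m * k < 2 ^ n * l) (hl : l ≤ 2 ^ m) : S.I (homP S n k m l h) := by
  unfold homP
  refine S.hI _ _ _ (cpath_mem S _ _ _ (by omega) ?_)
  have hb : 2 ^ n * l ≤ 2 ^ n * 2 ^ m := Nat.mul_le_mul_left _ hl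
  have hp : (2 : ℕ) ^ (n + m) = 2 ^ n * 2 ^ m := pow_add 2 n m
  omega

lemma homP_comp (S : Setup C) (n k m l p u : ℕ) (h1 : 2 ^ m * k ≤ 2 ^ n * l)
    (h2 : 2 ^ p * l ≤ 2 ^ m * u) (h3 : 2 ^ p * k ≤ 2 ^ n * u) :
    homP S n k m l h1 ≫ homP S m l p u h2 = homP S n k p u h3 := by
  have s1 : 2 ^ (m + p) * k ≤ 2 ^ (n + p) * l := by
    calc 2 ^ (m + p) * k = (2 ^ m * k) * 2 ^ p := by ring
      _ ≤ (2 ^ n * l) * 2 ^ p := Nat.mul_le_mul_right _ h1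
      _ = 2 ^ (n + p) * l := by ring
  have s2 : 2 ^ (n + p) * l ≤ 2 ^ (n + m) * u := by
    calc 2 ^ (n + p) * l = (2 ^ p * l) * 2 ^ n := by ring
      _ ≤ (2 ^ m * u) * 2 ^ n := Nat.mul_le_mul_right _ h2
      _ = 2 ^ (n + m) * u := by ring
  have A1 := homP_eq_cpath S p n k m l h1
  have A2' : HEq (homP S m l p u h2)
      (cpath S (n + m + p) (2 ^ (m + p) * k + (2 ^ (n + p) * l - 2 ^ (m + p) * k))
        (2 ^ (n + m) * u - 2 ^ (n + p) * l)) :=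
    (homP_eq_cpath S n m l p u h2).trans (cpath_congr S (by omega)
      (by rw [show p + n = n + p by omega]; exact (Nat.add_sub_cancel' s1).symm)
      (by rw [Nat.add_comm m n, Nat.add_comm p n]))
  have A3' : HEq (homP S n k p u h3)
      (cpath S (n + m + p) (2 ^ (m + p) * k) (2 ^ (n + m) * u - 2 ^ (m + p) * k)) :=
    (homP_eq_cpath S m n k p u h3).trans (cpath_congr S (by omega)
      (by rw [Nat.add_comm p m]) (by rw [Nat.add_comm n m, Nat.add_comm p m]))
  have eq1 : Ob S n k = Ob S (n + m + p) (2 ^ (m + p) * k) := by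
    rw [show n + m + p = n + (m + p) by omega]
    exact (lift_eq S (m + p) n k).symm
  have eq2 : Ob S m l = Ob S (n + m + p)
      (2 ^ (m + p) * k + (2 ^ (n + p) * l - 2 ^ (m + p) * k)) := by
    rw [Nat.add_sub_cancel' s1, show n + m + p = m + (n + p) by omega]
    exact (lift_eq S (n + p) m l).symm
  have eq3 : Ob S p u = Ob S (n + m + p)
      (2 ^ (m + p) * k + (2 ^ (n + p) * l - 2 ^ (m + p) * k)
        + (2 ^ (n + m) * u - 2 ^ (n + p) * l)) := by
    rw [Nat.add_sub_cancel' s1, Nat.add_sub_cancel' s2,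
      show n + m + p = p + (n + m) by omega]
    exact (lift_eq S (n + m) p u).symm
  have comb := (heq_comp eq1 eq2 eq3 A1 A2').trans
    (cpath_add S (n + m + p) (2 ^ (m + p) * k) (2 ^ (n + p) * l - 2 ^ (m + p) * k)
      (2 ^ (n + m) * u - 2 ^ (n + p) * l)).symm
  have tlen : (2 ^ (n + p) * l - 2 ^ (m + p) * k) + (2 ^ (n + m) * u - 2 ^ (n + p) * l)
      = 2 ^ (n + m) * u - 2 ^ (m + p) * k := by
    rw [Nat.add_comm]
    exact tsub_add_tsub_cancel s2 s1
  exact eq_of_heq (comb.trans ((cpath_congr S rfl rfl tlen).trans A3'.symm))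


lemma cpath_full (S : Setup C) : ∀ N : ℕ, HEq (cpath S N 0 (2 ^ N)) S.f
  | 0 => by
    have h1 : (𝟙 (Ob S 0 0)) ≫ St S 0 0 = S.f := by rw [Category.id_comp]; rfl
    exact heq_of_eq h1
  | N + 1 => by
    refine ((cpath_congr S rfl (show (0 : ℕ) = 2 * 0 by omega)
      (show 2 ^ (N + 1) = 2 * 2 ^ N by ring)).trans ?_)
    exact (cpath_dbl S N 0 (2 ^ N)).trans (cpath_full S N)

lemma homP_f (S : Setup C) (n m : ℕ) (pf : 2 ^ m * 0 ≤ 2 ^ n * 2 ^ m) :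
    HEq (homP S n 0 m (2 ^ m) pf) S.f := by
  refine (homP_eq_cpath S 0 n 0 m (2 ^ m) pf).trans ?_
  refine (cpath_congr S (show n + m + 0 = n + m by omega) (show 2 ^ (m + 0) * 0 = 0 by ring)
    ?_).trans (cpath_full S (n + m))
  rw [show 2 ^ (m + 0) * 0 = 0 by ring, Nat.sub_zero, show n + 0 = n by omega, ← pow_add]

lemma homP_f' (S : Setup C) (n k m l : ℕ) (hk : k = 0) (hl : l = 2 ^ m)
    (pf : 2 ^ m * k ≤ 2 ^ n * l) : HEq (homP S n k m l pf) S.f := by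
  subst hk; subst hl; exact homP_f S n m pf

lemma Ob_l0 (S : Setup C) (n k : ℕ) (hk : k = 0) : Ob S n k = S.X := by
  subst hk
  have h := lift_eq S n 0 0
  rw [show 0 + n = n by omega, show 2 ^ n * 0 = 0 by ring] at h
  exact h

lemma Ob_r1 (S : Setup C) (n k : ℕ) (hk : k = 2 ^ n) : Ob S n k = S.Y := by
  subst hk
  have h := lift_eq S n 0 1
  rw [show 0 + n = n by omega, show 2 ^ n * 1 = 2 ^ n by ring] at h
  exact h


section OrderPart

def Dy (q : ℚ) : Prop := ∃ n k : ℕ, q = (k : ℚ) / 2 ^ n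

lemma Dy.zero : Dy 0 := ⟨0, 0, by norm_num⟩
lemma Dy.one : Dy 1 := ⟨0, 1, by norm_num⟩

lemma Dy.mid {a b : ℚ} (ha : Dy a) (hb : Dy b) : Dy ((a + b) / 2) := by
  obtain ⟨n, k, rfl⟩ := ha
  obtain ⟨m, l, rfl⟩ := hb
  refine ⟨n + m + 1, k * 2 ^ m + l * 2 ^ n, ?_⟩
  have h1 : (2 : ℚ) ^ n ≠ 0 := by positivity
  have h2 : (2 : ℚ) ^ m ≠ 0 := by positivity
  push_cast
  rw [div_add_div _ _ h1 h2, div_div, div_eq_div_iff (by positivity) (by positivity)]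
  ring

lemma Dy.half {a : ℚ} (ha : Dy a) : Dy (a / 2) := by
  obtain ⟨n, k, rfl⟩ := ha
  refine ⟨n + 1, k, ?_⟩
  rw [pow_succ]
  field_simp

abbrev Bt : Type := {q : ℚ // Dy q ∧ 0 < q ∧ q < 1}

instance : Nonempty Bt := ⟨⟨1 / 2, ⟨1, 1, by norm_num⟩, by norm_num, by norm_num⟩⟩

instance : DenselyOrdered Bt := by
  constructor
  rintro ⟨a, dya, ha0, ha1⟩ ⟨b, dyb, hb0, hb1⟩ hab
  have hab' : a < b := hab
  refine ⟨⟨(a + b) / 2, Dy.mid dya dyb, by linarith, by linarith⟩, ?_, ?_⟩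
  · show a < (a + b) / 2
    linarith
  · show (a + b) / 2 < b
    linarith

instance : NoMinOrder Bt := by
  constructor
  rintro ⟨a, dya, ha0, ha1⟩
  refine ⟨⟨a / 2, Dy.half dya, by linarith, by linarith⟩, ?_⟩
  show a / 2 < a
  linarith

instance : NoMaxOrder Bt := by
  constructor
  rintro ⟨a, dya, ha0, ha1⟩
  refine ⟨⟨(a + 1) / 2, Dy.mid dya Dy.one, by linarith, by linarith⟩, ?_⟩
  show a < (a + 1) / 2
  linarith

instance : Nonempty ↥(Set.Ioo (0 : ℚ) 1) := ⟨⟨1 / 2, by norm_num⟩⟩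

noncomputable def emb : ↥(Set.Ioo (0 : ℚ) 1) ≃o Bt :=
  (Order.iso_of_countable_dense _ _).some

lemma qone_ne_qzero : qone ≠ qzero := by
  simp only [qzero, qone, ne_eq, Subtype.mk.injEq]
  norm_num

noncomputable def phi (q : QIcc) : ℚ :=
  if h0 : q = qzero then 0
  else if h1 : q = qone then 1
  else (emb ⟨q.1, lt_of_le_of_ne q.2.1 (fun e => h0 (Subtype.ext e.symm)),
    lt_of_le_of_ne q.2.2 (fun e => h1 (Subtype.ext e))⟩).1

lemma phi_zero : phi qzero = 0 := by simp [phi]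

lemma phi_one : phi qone = 1 := by simp [phi, qone_ne_qzero]

lemma phi_mem (q : QIcc) : Dy (phi q) ∧ 0 ≤ phi q ∧ phi q ≤ 1 := by
  unfold phi
  split_ifs with h0 h1
  · exact ⟨Dy.zero, by norm_num⟩
  · exact ⟨Dy.one, by norm_num⟩
  · exact ⟨(emb _).2.1, le_of_lt (emb _).2.2.1, le_of_lt (emb _).2.2.2⟩

lemma phi_strictMono {a b : QIcc} (hab : a < b) : phi a < phi b := by
  have hab' : a.1 < b.1 := hab
  have hbz : b ≠ qzero := by
    intro e
    rw [e] at hab'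
    exact absurd (lt_of_le_of_lt a.2.1 hab') (lt_irrefl _)
  have hao : a ≠ qone := by
    intro e
    rw [e] at hab'
    exact absurd (lt_of_lt_of_le hab' b.2.2) (lt_irrefl _)
  by_cases h0a : a = qzero
  · by_cases h1b : b = qone
    · rw [h0a, h1b, phi_zero, phi_one]; norm_num
    · rw [h0a, phi_zero]
      unfold phi
      rw [dif_neg hbz, dif_neg h1b]
      exact (emb _).2.2.1
  · by_cases h1b : b = qone
    · rw [h1b, phi_one]
      unfold phi
      rw [dif_neg h0a, dif_neg hao]
      exact (emb _).2.2.2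
    · unfold phi
      rw [dif_neg h0a, dif_neg hao, dif_neg hbz, dif_neg h1b]
      exact Subtype.coe_lt_coe.mpr (emb.strictMono (Subtype.mk_lt_mk.mpr hab'))


lemma rep_exists (q : QIcc) : ∃ p : ℕ × ℕ, (p.2 : ℚ) = phi q * 2 ^ p.1 := by
  obtain ⟨n, k, hk⟩ := (phi_mem q).1
  refine ⟨(n, k), ?_⟩
  rw [hk]
  field_simp

noncomputable def rep (q : QIcc) : ℕ × ℕ := (rep_exists q).choose

lemma rep_spec (q : QIcc) : ((rep q).2 : ℚ) = phi q * 2 ^ (rep q).1 :=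
  (rep_exists q).choose_spec

lemma rep_le (q : QIcc) : (rep q).2 ≤ 2 ^ (rep q).1 := by
  have h := rep_spec q
  have hle := (phi_mem q).2.2
  have key : ((rep q).2 : ℚ) ≤ ((2 ^ (rep q).1 : ℕ) : ℚ) := by
    push_cast
    rw [h]
    nlinarith [pow_pos (show (0 : ℚ) < 2 by norm_num) (rep q).1]
  exact_mod_cast key

lemma rep_cross {a b : QIcc} (h : phi a ≤ phi b) :
    2 ^ (rep b).1 * (rep a).2 ≤ 2 ^ (rep a).1 * (rep b).2 := by
  have key : ((2 ^ (rep b).1 * (rep a).2 : ℕ) : ℚ) ≤ ((2 ^ (rep a).1 * (rep b).2 : ℕ) : ℚ) := by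
    push_cast
    rw [rep_spec a, rep_spec b]
    calc (2 : ℚ) ^ (rep b).1 * (phi a * 2 ^ (rep a).1)
        = phi a * (2 ^ (rep a).1 * 2 ^ (rep b).1) := by ring
      _ ≤ phi b * (2 ^ (rep a).1 * 2 ^ (rep b).1) :=
          mul_le_mul_of_nonneg_right h (by positivity)
      _ = 2 ^ (rep a).1 * (phi b * 2 ^ (rep b).1) := by ring
  exact_mod_cast key

lemma rep_cross_lt {a b : QIcc} (h : phi a < phi b) :
    2 ^ (rep b).1 * (rep a).2 < 2 ^ (rep a).1 * (rep b).2 := by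
  have key : ((2 ^ (rep b).1 * (rep a).2 : ℕ) : ℚ) < ((2 ^ (rep a).1 * (rep b).2 : ℕ) : ℚ) := by
    push_cast
    rw [rep_spec a, rep_spec b]
    calc (2 : ℚ) ^ (rep b).1 * (phi a * 2 ^ (rep a).1)
        = phi a * (2 ^ (rep a).1 * 2 ^ (rep b).1) := by ring
      _ < phi b * (2 ^ (rep a).1 * 2 ^ (rep b).1) :=
          mul_lt_mul_of_pos_right h (by positivity)
      _ = 2 ^ (rep a).1 * (phi b * 2 ^ (rep b).1) := by ring
  exact_mod_cast key

lemma phi_mono {a b : QIcc} (h : a ≤ b) : phi a ≤ phi b := by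
  rcases eq_or_lt_of_le h with h' | h'
  · rw [h']
  · exact le_of_lt (phi_strictMono h')

lemma rep0 : (rep qzero).2 = 0 := by
  have h := rep_spec qzero
  rw [phi_zero, zero_mul] at h
  exact_mod_cast h

lemma rep1 : (rep qone).2 = 2 ^ (rep qone).1 := by
  have h := rep_spec qone
  rw [phi_one, one_mul] at h
  exact_mod_cast h

end OrderPart

noncomputable def Fc (S : Setup C) : QIcc ⥤ C where
  obj q := Ob S (rep q).1 (rep q).2
  map {a b} h := homP S (rep a).1 (rep a).2 (rep b).1 (rep b).2
    (rep_cross (phi_mono (leOfHom h)))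
  map_id q := homP_id S _ _ (le_refl _)
  map_comp {a b c} g h := (homP_comp S _ _ _ _ _ _
    (rep_cross (phi_mono (leOfHom g))) (rep_cross (phi_mono (leOfHom h)))
    (rep_cross (phi_mono (leOfHom (g ≫ h))))).symm

end SubAux

/-- If `I` is a subdivisible idealoid of `C`, then any morphism `f : X ⟶ Y` in `I` refines
to a functor `F : (ℚ ∩ [0,1]) ⥤ C` with `F(a) ⟶ F(b)` in `I` for all `a < b`, whose
morphism `F(0) ⟶ F(1)` agrees with `f` (up to the identifications `F(0) ≅ X`, `F(1) ≅ Y`). -/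
theorem subdivisible_refinement {C : Type*} [Category C] (I : MorphismProperty C)
    (hI : IsIdealoid I) (hsub : IsSubdivisible I) {X Y : C} (f : X ⟶ Y) (hf : I f) :
    ∃ (F : QIcc ⥤ C) (e₀ : F.obj qzero ≅ X) (e₁ : F.obj qone ≅ Y),
      (∀ (a b : QIcc) (h : a < b), I (F.map (homOfLE h.le))) ∧
      F.map (homOfLE qzero_le_qone) = e₀.hom ≫ f ≫ e₁.inv := by
    classical
  set S : SubAux.Setup C := ⟨I, hI, hsub, X, Y, f, hf⟩ with hS
  have E0 : (SubAux.Fc S).obj qzero = X := SubAux.Ob_l0 S _ _ SubAux.rep0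
  have E1 : (SubAux.Fc S).obj qone = Y := SubAux.Ob_r1 S _ _ SubAux.rep1
  refine ⟨SubAux.Fc S, eqToIso E0, eqToIso E1, ?_, ?_⟩
  · intro a b h
    exact SubAux.homP_mem S _ _ _ _ (SubAux.rep_cross (SubAux.phi_mono h.le))
      (SubAux.rep_cross_lt (SubAux.phi_strictMono h)) (SubAux.rep_le b)
  · rw [eqToIso.hom, eqToIso.inv]
    refine (conj_eqToHom_iff_heq _ _ E0 E1).mpr ?_
    exact SubAux.homP_f' S _ _ _ _ SubAux.rep0 SubAux.rep1
      (SubAux.rep_cross (SubAux.phi_mono qzero_le_qone))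
end

section
/- For any idealoid I of a category C, there exists a largest subdivisible subidealoid of I; namely, the class J of all morphisms f : C(0) → C(1) admitting a refinement to a functor C : (ℚ ∩ [0,1]) → C with all morphisms C(a) → C(b), a < b, lying in I. J is a subdivisible idealoid contained in I, and it contains every subdivisible subidealoid of I. -/
open CategoryTheory

/-- The class `J` of morphisms admitting a refinement to a functor `(ℚ ∩ [0,1]) ⥤ C` all of
whose strict-transition morphisms lie in `I`. -/
def Refinable {C : Type*} [Category C] (I : MorphismProperty C) : MorphismProperty C :=
  fun X Y f =>
    ∃ (F : QIcc ⥤ C) (e₀ : F.obj qzero ≅ X) (e₁ : F.obj qone ≅ Y),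
      (∀ (a b : QIcc) (h : a < b), I (F.map (homOfLE h.le))) ∧
      F.map (homOfLE qzero_le_qone) = e₀.hom ≫ f ≫ e₁.inv

/-!
`Refinable I ≤ I` because every member is, up to isomorphism, a transition `F(0 → 1)` of a
functor whose strict transitions lie in `I`. It is subdivisible because
`F(0 → 1) = F(0 → ½) ≫ F(½ → 1)` and each half is refinable by reparametrizing `F` affinely, and
it is an idealoid because the objects of `F` at `0` and `1` can be replaced while keeping the
interior.

For maximality, halve a morphism `f` of a subdivisible idealoid `K ≤ I` over and over: level `n`
is a chain of `2 ^ n` morphisms of `K` composing to `f`, and position `k` of level `n` is position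
`2k` of level `n + 1`. Gluing the levels gives a functor on the dyadic rationals of `[0,1]` with
all strict transitions in `K`, and Cantor's back-and-forth embeds `ℚ ∩ [0,1]` into those dyadic
rationals fixing `0` and `1`.
-/

lemma qzero_lt_qone : qzero < qone := Subtype.mk_lt_mk.mpr one_pos

lemma ne_qzero_of_lt {a b : QIcc} (h : a < b) : b ≠ qzero := by
  rintro rfl
  exact absurd a.2.1 (not_le.mpr h)

lemma ne_qone_of_lt {a b : QIcc} (h : a < b) : a ≠ qone := by
  rintro rfl
  exact absurd b.2.2 (not_le.mpr h)

def QIcc.affine (a b : QIcc) (hab : a ≤ b) (x : QIcc) : QIcc :=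
  ⟨a + (b - a) * x, by
    have : (a : ℚ) ≤ b := hab
    constructor <;> nlinarith [a.2.1, b.2.2, x.2.1, x.2.2]⟩

lemma QIcc.affine_strictMono {a b : QIcc} (hab : a < b) : StrictMono (QIcc.affine a b hab.le) :=
  fun x y hxy => by
    have : (a : ℚ) < b := hab
    have : (x : ℚ) < y := hxy
    change (a : ℚ) + (b - a) * x < a + (b - a) * y
    nlinarith

lemma QIcc.affine_zero (a b : QIcc) (hab : a ≤ b) : QIcc.affine a b hab qzero = a :=
  Subtype.ext (by simp [QIcc.affine, qzero])

lemma QIcc.affine_one (a b : QIcc) (hab : a ≤ b) : QIcc.affine a b hab qone = b :=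
  Subtype.ext (by simp [QIcc.affine, qone])

lemma strictMono_Icc_extend {α : Type*} [LinearOrder α] {a b : α}
    [∀ x, Decidable (x ∈ Set.Ioo a b)] {g : Set.Ioo a b → α} (hg : StrictMono g)
    (hmem : ∀ x, g x ∈ Set.Ioo a b) :
    StrictMono fun x : Set.Icc a b => if h : x.1 ∈ Set.Ioo a b then g ⟨x, h⟩ else x.1 := by
  intro x y hxy
  have hxy' : x.1 < y.1 := hxy
  dsimp only
  split_ifs with hx hy hy
  · exact hg hxy
  · have : y.1 = b := le_antisymm y.2.2 (not_lt.1 fun h => hy ⟨hx.1.trans hxy', h⟩)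
    exact (hmem _).2.trans_eq this.symm
  · have : x.1 = a := le_antisymm (not_lt.1 fun h => hx ⟨h, hxy'.trans hy.2⟩) x.2.1
    rw [this]
    exact (hmem _).1
  · exact hxy'

/-- The dyadic rational `num / 2 ^ level`, not necessarily in lowest terms. -/
structure DyadicFrac where
  level : ℕ
  num : ℕ

namespace DyadicFrac

def val (p : DyadicFrac) : ℚ := (p.num : ℚ) / 2 ^ p.level

instance : Preorder DyadicFrac := Preorder.lift val

lemma le_def {p q : DyadicFrac} : p ≤ q ↔ p.val ≤ q.val := Iff.rfl

lemma lt_def {p q : DyadicFrac} : p < q ↔ p.val < q.val := Iff.rfl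

/-- The numerator of `p` over the denominator `2 ^ L`; meaningful for `p.level ≤ L` only, as the
subtraction truncates. -/
def numAt (p : DyadicFrac) (L : ℕ) : ℕ := 2 ^ (L - p.level) * p.num

lemma cast_numAt {p : DyadicFrac} {L : ℕ} (h : p.level ≤ L) :
    (p.numAt L : ℚ) = p.val * 2 ^ L := by
  obtain ⟨j, rfl⟩ := Nat.exists_eq_add_of_le h
  rw [numAt, val, Nat.add_sub_cancel_left, pow_add]
  push_cast
  field_simp

lemma numAt_le_numAt {p q : DyadicFrac} {L : ℕ} (hp : p.level ≤ L) (hq : q.level ≤ L)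
    (h : p ≤ q) : p.numAt L ≤ q.numAt L := by
  have h' : (p.numAt L : ℚ) ≤ q.numAt L := by
    rw [cast_numAt hp, cast_numAt hq]
    exact mul_le_mul_of_nonneg_right h (by positivity)
  exact_mod_cast h'

lemma numAt_lt_numAt {p q : DyadicFrac} {L : ℕ} (hp : p.level ≤ L) (hq : q.level ≤ L)
    (h : p < q) : p.numAt L < q.numAt L := by
  have h' : (p.numAt L : ℚ) < q.numAt L := by
    rw [cast_numAt hp, cast_numAt hq]
    exact mul_lt_mul_of_pos_right h (by positivity)
  exact_mod_cast h'

lemma numAt_eq_of_val_eq {p q : DyadicFrac} {L : ℕ} (hp : p.level ≤ L) (hq : q.level ≤ L)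
    (h : p.val = q.val) : p.numAt L = q.numAt L := by
  have h' : (p.numAt L : ℚ) = q.numAt L := by rw [cast_numAt hp, cast_numAt hq, h]
  exact_mod_cast h'

lemma numAt_of_le {p : DyadicFrac} {L L' : ℕ} (hp : p.level ≤ L) (hL : L ≤ L') :
    p.numAt L' = 2 ^ (L' - L) * p.numAt L := by
  rw [numAt, numAt, ← mul_assoc, ← pow_add]
  congr 2
  omega

lemma numAt_le_two_pow {p : DyadicFrac} {L : ℕ} (hp : p.level ≤ L) (h : p.num ≤ 2 ^ p.level) :
    p.numAt L ≤ 2 ^ L := by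
  calc p.numAt L ≤ 2 ^ (L - p.level) * 2 ^ p.level := Nat.mul_le_mul_left _ h
    _ = 2 ^ L := by rw [← pow_add, Nat.sub_add_cancel hp]

lemma exists_val_eq_midpoint (p q : DyadicFrac) : ∃ r : DyadicFrac, r.val = (p.val + q.val) / 2 :=
  ⟨⟨p.level + q.level + 1, 2 ^ q.level * p.num + 2 ^ p.level * q.num⟩, by
    simp only [val]
    push_cast
    field_simp
    ring⟩

end DyadicFrac

abbrev DyadicIoo : Type := {x : ℚ // x ∈ Set.Ioo 0 1 ∧ ∃ p : DyadicFrac, p.val = x}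

instance : DenselyOrdered DyadicIoo where
  dense a b hab := by
    have hab' : (a : ℚ) < b := hab
    obtain ⟨p, hp⟩ := a.2.2
    obtain ⟨q, hq⟩ := b.2.2
    obtain ⟨r, hr⟩ := p.exists_val_eq_midpoint q
    refine ⟨⟨(a + b) / 2, ⟨by linarith [a.2.1.1], by linarith [b.2.1.2]⟩, r, by rw [hr, hp, hq]⟩,
      show (a : ℚ) < (a + b) / 2 by linarith, show (a + b) / 2 < (b : ℚ) by linarith⟩

instance : Nontrivial DyadicIoo :=
  ⟨⟨⟨1 / 2, ⟨by norm_num, by norm_num⟩, ⟨1, 1⟩, by norm_num [DyadicFrac.val]⟩,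
    ⟨1 / 4, ⟨by norm_num, by norm_num⟩, ⟨2, 1⟩, by norm_num [DyadicFrac.val]⟩,
    fun h => by simpa using congrArg Subtype.val h⟩⟩

/-- Cantor's back-and-forth on the interiors, extended by the identity at the endpoints. -/
lemma exists_strictMono_dyadicFrac :
    ∃ φ : QIcc → DyadicFrac, StrictMono φ ∧ (φ qzero).val = 0 ∧ (φ qone).val = 1 ∧
      ∀ q, (φ q).num ≤ 2 ^ (φ q).level := by
  obtain ⟨e⟩ := Order.embedding_from_countable_to_dense (α := Set.Ioo (0 : ℚ) 1) (β := DyadicIoo)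
  let ψ : QIcc → ℚ := fun x => if h : x.1 ∈ Set.Ioo 0 1 then (e ⟨x, h⟩ : ℚ) else x.1
  have hψ : StrictMono ψ :=
    strictMono_Icc_extend (g := fun x => (e x : ℚ)) (fun _ _ h => e.strictMono h) fun x => (e x).2.1
  have hdyadic : ∀ x, ∃ p : DyadicFrac, p.val = ψ x := by
    intro x
    by_cases h : x.1 ∈ Set.Ioo 0 1
    · rw [show ψ x = e ⟨x, h⟩ from dif_pos h]
      exact (e _).2.2
    · obtain h₀ | h₁ : x.1 = 0 ∨ x.1 = 1 := by
        by_contra! hne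
        exact h ⟨lt_of_le_of_ne x.2.1 hne.1.symm, lt_of_le_of_ne x.2.2 hne.2⟩
      · exact ⟨⟨0, 0⟩, by simp [ψ, h₀, DyadicFrac.val]⟩
      · exact ⟨⟨0, 1⟩, by simp [ψ, h₁, DyadicFrac.val]⟩
  choose φ hφ using hdyadic
  have hψ₀ : ψ qzero = 0 := by simp [ψ, qzero]
  have hψ₁ : ψ qone = 1 := by simp [ψ, qone]
  refine ⟨φ, fun a b h => ?_, by rw [hφ, hψ₀], by rw [hφ, hψ₁], fun x => ?_⟩
  · exact DyadicFrac.lt_def.2 (by rw [hφ, hφ]; exact hψ h)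
  · have hle : (φ x).val ≤ 1 := by rw [hφ, ← hψ₁]; exact hψ.monotone x.2.2
    rw [DyadicFrac.val, div_le_one (by positivity)] at hle
    exact_mod_cast hle

def mulFunctor (c : ℕ) : ℕ ⥤ ℕ := Monotone.functor fun _ _ h => Nat.mul_le_mul_left c h

lemma mulFunctor_one : mulFunctor 1 = 𝟭 ℕ :=
  CategoryTheory.Functor.ext (fun k => one_mul k) fun _ _ _ => Subsingleton.elim _ _

lemma mulFunctor_mul (a b : ℕ) : mulFunctor (a * b) = mulFunctor a ⋙ mulFunctor b :=
  CategoryTheory.Functor.ext (fun k => show a * b * k = b * (a * k) by ring) fun _ _ _ =>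
    Subsingleton.elim _ _

section

variable {C : Type*} [Category C]

lemma CategoryTheory.Functor.ext_of_map_succ {F G : ℕ ⥤ C} (hobj : ∀ n, F.obj n = G.obj n)
    (hmap : ∀ n, F.map (homOfLE (n.le_add_right 1)) =
      eqToHom (hobj n) ≫ G.map (homOfLE (n.le_add_right 1)) ≫ eqToHom (hobj (n + 1)).symm) :
    F = G := by
  refine Functor.ext hobj fun i j φ => ?_
  suffices ∀ h : i ≤ j, F.map (homOfLE h) =
      eqToHom (hobj i) ≫ G.map (homOfLE h) ≫ eqToHom (hobj j).symm from this (leOfHom φ)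
  clear φ
  intro h
  induction j, h using Nat.le_induction with
  | base => simp
  | succ j hij ih =>
    rw [← homOfLE_comp hij (j.le_add_right 1), F.map_comp, G.map_comp, ih, hmap]
    simp

lemma CategoryTheory.Functor.map_homOfLE_heq {P : Type*} [Preorder P] (G : P ⥤ C)
    {a b a' b' : P} (ha : a = a') (hb : b = b') (h : a ≤ b) (h' : a' ≤ b') :
    G.map (homOfLE h) ≍ G.map (homOfLE h') := by
  subst ha hb
  rfl

section Refinable

variable {I : MorphismProperty C}

theorem refinable_le (hI : IsIdealoid I) : Refinable I ≤ I := by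
  rintro X Y f ⟨F, e₀, e₁, hF, hf⟩
  simpa [hf] using hI e₀.inv _ e₁.hom (hF _ _ qzero_lt_qone)

lemma Refinable.iso_comp_comp {X Y X' Y' : C} {f : X ⟶ Y} (hf : Refinable I f) (α : X' ≅ X)
    (β : Y ≅ Y') : Refinable I (α.hom ≫ f ≫ β.hom) := by
  obtain ⟨F, e₀, e₁, hF, hmap⟩ := hf
  exact ⟨F, e₀ ≪≫ α.symm, e₁ ≪≫ β, hF, by simp [hmap]⟩

lemma refinable_map_of_strictMono {P : Type*} [Preorder P] (G : P ⥤ C) {φ : QIcc → P}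
    (hφ : StrictMono φ) (hG : ∀ a b (h : a < b), I (G.map (homOfLE (hφ h).le))) {p q : P}
    (hp : φ qzero = p) (hq : φ qone = q) (hpq : p ≤ q) : Refinable I (G.map (homOfLE hpq)) := by
  subst hp hq
  exact ⟨hφ.monotone.functor ⋙ G, Iso.refl _, Iso.refl _, hG, by simp; rfl⟩

lemma refinable_map (F : QIcc ⥤ C) (hF : ∀ a b (h : a < b), I (F.map (homOfLE h.le)))
    {a b : QIcc} (hab : a < b) : Refinable I (F.map (homOfLE hab.le)) :=
  refinable_map_of_strictMono F (QIcc.affine_strictMono hab)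
    (fun _ _ h => hF _ _ (QIcc.affine_strictMono hab h)) (QIcc.affine_zero a b hab.le)
    (QIcc.affine_one a b hab.le) hab.le

theorem isSubdivisible_refinable : IsSubdivisible (Refinable I) := by
  rintro X Y f ⟨F, e₀, e₁, hF, hf⟩
  let qhalf : QIcc := ⟨1 / 2, by norm_num, by norm_num⟩
  have h₀ : qzero < qhalf := Subtype.mk_lt_mk.mpr (by norm_num)
  have h₁ : qhalf < qone := Subtype.mk_lt_mk.mpr (by norm_num)
  refine ⟨F.obj qhalf, e₀.inv ≫ F.map (homOfLE h₀.le), F.map (homOfLE h₁.le) ≫ e₁.hom, ?_, ?_, ?_⟩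
  · simpa using (refinable_map F hF h₀).iso_comp_comp e₀.symm (Iso.refl _)
  · simpa using (refinable_map F hF h₁).iso_comp_comp (Iso.refl _) e₁
  · rw [Category.assoc, ← F.map_comp_assoc, homOfLE_comp, hf]
    simp

section ReplaceEnds

variable (F : QIcc ⥤ C) {W Z : C} (h : W ⟶ F.obj qzero) (g : F.obj qone ⟶ Z)

noncomputable def replaceEndsObj (W Z : C) (q : QIcc) : C :=
  if q = qzero then W else if q = qone then Z else F.obj q

lemma replaceEndsObj_zero : replaceEndsObj F W Z qzero = W := if_pos rfl

lemma replaceEndsObj_one : replaceEndsObj F W Z qone = Z := by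
  rw [replaceEndsObj, if_neg qzero_lt_qone.ne', if_pos rfl]

lemma replaceEndsObj_of_ne {q : QIcc} (h₀ : q ≠ qzero) (h₁ : q ≠ qone) :
    replaceEndsObj F W Z q = F.obj q := by
  rw [replaceEndsObj, if_neg h₀, if_neg h₁]

noncomputable def replaceEndsIn (a : QIcc) (ha : a ≠ qone) : replaceEndsObj F W Z a ⟶ F.obj a :=
  if h₀ : a = qzero then eqToHom (by rw [h₀, replaceEndsObj_zero]) ≫ h ≫ eqToHom (by rw [h₀])
  else eqToHom (replaceEndsObj_of_ne F h₀ ha)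

noncomputable def replaceEndsOut (b : QIcc) (hb : b ≠ qzero) : F.obj b ⟶ replaceEndsObj F W Z b :=
  if h₁ : b = qone then eqToHom (by rw [h₁]) ≫ g ≫ eqToHom (by rw [h₁, replaceEndsObj_one])
  else eqToHom (replaceEndsObj_of_ne F hb h₁).symm

lemma replaceEndsOut_comp_replaceEndsIn (b : QIcc) (h₀ : b ≠ qzero) (h₁ : b ≠ qone) :
    replaceEndsOut F g b h₀ ≫ replaceEndsIn F h b h₁ = 𝟙 _ := by
  simp [replaceEndsOut, replaceEndsIn, h₀, h₁]

noncomputable def replaceEndsMap {a b : QIcc} (hab : a ≤ b) :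
    replaceEndsObj F W Z a ⟶ replaceEndsObj F W Z b :=
  if hb : a = b then eqToHom (by rw [hb])
  else replaceEndsIn F h a (ne_qone_of_lt (hab.lt_of_ne hb)) ≫ F.map (homOfLE hab) ≫
    replaceEndsOut F g b (ne_qzero_of_lt (hab.lt_of_ne hb))

lemma replaceEndsMap_self {a : QIcc} (ha : a ≤ a) : replaceEndsMap F h g ha = 𝟙 _ := by
  simp [replaceEndsMap]

lemma replaceEndsMap_of_lt {a b : QIcc} (hab : a < b) :
    replaceEndsMap F h g hab.le = replaceEndsIn F h a (ne_qone_of_lt hab) ≫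
      F.map (homOfLE hab.le) ≫ replaceEndsOut F g b (ne_qzero_of_lt hab) :=
  dif_neg hab.ne

/-- `F` with its objects at `0` and `1` replaced by `W` and `Z`, and its transitions out of `0`
and into `1` composed with `h` and `g`. -/
noncomputable def replaceEnds : QIcc ⥤ C where
  obj := replaceEndsObj F W Z
  map φ := replaceEndsMap F h g (leOfHom φ)
  map_id _ := replaceEndsMap_self F h g _
  map_comp {a b c} φ ψ := by
    obtain rfl | hab := (leOfHom φ).eq_or_lt
    · rw [replaceEndsMap_self, Category.id_comp]
    obtain rfl | hbc := (leOfHom ψ).eq_or_lt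
    · rw [replaceEndsMap_self, Category.comp_id]
    rw [replaceEndsMap_of_lt F h g hab, replaceEndsMap_of_lt F h g hbc,
      replaceEndsMap_of_lt F h g (hab.trans hbc)]
    simp only [Category.assoc]
    rw [reassoc_of% replaceEndsOut_comp_replaceEndsIn F h g b (ne_qzero_of_lt hab)
      (ne_qone_of_lt hbc), ← F.map_comp_assoc, homOfLE_comp]

end ReplaceEnds

theorem isIdealoid_refinable (hI : IsIdealoid I) : IsIdealoid (Refinable I) := by
  rintro W X Y Z h f g ⟨F, e₀, e₁, hF, hf⟩
  refine ⟨replaceEnds F (h ≫ e₀.inv) (e₁.hom ≫ g), eqToIso (replaceEndsObj_zero F (Z := Z)),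
    eqToIso (replaceEndsObj_one F (W := W)), fun a b hab => ?_, ?_⟩
  · change I (replaceEndsMap F _ _ hab.le)
    rw [replaceEndsMap_of_lt F _ _ hab]
    exact hI _ _ _ (hF a b hab)
  · change replaceEndsMap F _ _ qzero_le_qone = _
    simp [replaceEndsMap_of_lt F _ _ qzero_lt_qone, replaceEndsIn, replaceEndsOut, hf]
    rfl

end Refinable

section Subdivide

variable (K : MorphismProperty C)

/-- Required for every `f`, not only for `f ∈ K`, because the chains below continue past `2 ^ n`
with identities. -/
structure Halving {X Y : C} (f : X ⟶ Y) where
  mid : C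
  left : X ⟶ mid
  right : mid ⟶ Y
  fac : left ≫ right = f
  mem : K f → K left ∧ K right

variable {K}

lemma IsIdealoid.comp_mem (hK : IsIdealoid K) {X Y Z : C} (g : X ⟶ Y) {f : Y ⟶ Z} (hf : K f) :
    K (g ≫ f) := by
  simpa using hK g f (𝟙 Z) hf

lemma IsSubdivisible.nonempty_halving (hK : IsSubdivisible K) {X Y : C} (f : X ⟶ Y) :
    Nonempty (Halving K f) := by
  by_cases hf : K f
  · obtain ⟨Z, u, v, hu, hv, huv⟩ := hK f hf
    exact ⟨⟨Z, u, v, huv, fun _ => ⟨hu, hv⟩⟩⟩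
  · exact ⟨⟨X, 𝟙 X, f, Category.id_comp f, fun h => absurd h hf⟩⟩

lemma map_mem_of_map_succ_mem (hKi : IsIdealoid K) (G : ℕ ⥤ C) {N : ℕ}
    (hG : ∀ k < N, K (G.map (homOfLE (k.le_add_right 1)))) {k l : ℕ} (hkl : k < l) (hl : l ≤ N) :
    K (G.map (homOfLE hkl.le)) := by
  obtain ⟨m, rfl⟩ : ∃ m, l = m + 1 := ⟨l - 1, by omega⟩
  rw [← homOfLE_comp (Nat.le_of_lt_succ hkl) (m.le_add_right 1), G.map_comp]
  exact hKi.comp_mem _ (hG m (by omega))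

variable (hK : IsSubdivisible K) (F : ℕ ⥤ C)

noncomputable def stepHalving (j : ℕ) : Halving K (F.map (homOfLE (j.le_add_right 1))) :=
  (hK.nonempty_halving _).some

noncomputable def subdivideObj (k : ℕ) : C :=
  if k % 2 = 0 then F.obj (k / 2) else (stepHalving hK F (k / 2)).mid

lemma subdivideObj_of_even {k : ℕ} (hk : k % 2 = 0) : subdivideObj hK F k = F.obj (k / 2) :=
  if_pos hk

lemma subdivideObj_of_odd {k : ℕ} (hk : k % 2 = 1) :
    subdivideObj hK F k = (stepHalving hK F (k / 2)).mid :=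
  if_neg (by omega)

lemma subdivideObj_two_mul (j : ℕ) : subdivideObj hK F (2 * j) = F.obj j := by
  rw [subdivideObj_of_even hK F (by omega)]
  exact congrArg F.obj (by omega)

lemma subdivideObj_two_mul_add_one (j : ℕ) :
    subdivideObj hK F (2 * j + 1) = (stepHalving hK F j).mid := by
  rw [subdivideObj_of_odd hK F (by omega)]
  exact congrArg (fun i => (stepHalving hK F i).mid) (by omega)

noncomputable def subdivideStep (k : ℕ) : subdivideObj hK F k ⟶ subdivideObj hK F (k + 1) :=
  if hk : k % 2 = 0 then
    eqToHom (subdivideObj_of_even hK F hk) ≫ (stepHalving hK F (k / 2)).left ≫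
      eqToHom (by
        rw [subdivideObj_of_odd hK F (by omega)]
        exact congrArg (fun i => (stepHalving hK F i).mid) (by omega))
  else
    eqToHom (subdivideObj_of_odd hK F (by omega)) ≫ (stepHalving hK F (k / 2)).right ≫
      eqToHom (by
        rw [subdivideObj_of_even hK F (by omega)]
        exact congrArg F.obj (by omega))

noncomputable def subdivide : ℕ ⥤ C := Functor.ofSequence (subdivideStep hK F)

lemma subdivide_map_succ (k : ℕ) :
    (subdivide hK F).map (homOfLE (k.le_add_right 1)) = subdivideStep hK F k :=
  Functor.ofSequence_map_homOfLE_succ _ k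

lemma subdivideStep_two_mul (j : ℕ) :
    subdivideStep hK F (2 * j) = eqToHom (subdivideObj_two_mul hK F j) ≫
      (stepHalving hK F j).left ≫ eqToHom (subdivideObj_two_mul_add_one hK F j).symm := by
  refine (conj_eqToHom_iff_heq _ _ _ (subdivideObj_two_mul_add_one hK F j)).2 ?_
  rw [subdivideStep, dif_pos (by omega)]
  refine (eqToHom_comp_heq _ _).trans ((comp_eqToHom_heq _ _).trans ?_)
  exact congr_arg_heq (fun i => (stepHalving hK F i).left) (by omega)

lemma subdivideStep_two_mul_add_one (j : ℕ) :
    subdivideStep hK F (2 * j + 1) = eqToHom (subdivideObj_two_mul_add_one hK F j) ≫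
      (stepHalving hK F j).right ≫ eqToHom (subdivideObj_two_mul hK F (j + 1)).symm := by
  refine (conj_eqToHom_iff_heq _ _ _ (subdivideObj_two_mul hK F (j + 1))).2 ?_
  rw [subdivideStep, dif_neg (by omega)]
  refine (eqToHom_comp_heq _ _).trans ((comp_eqToHom_heq _ _).trans ?_)
  exact congr_arg_heq (fun i => (stepHalving hK F i).right) (by omega)

lemma subdivideStep_two_mul_comp (j : ℕ) :
    subdivideStep hK F (2 * j) ≫ subdivideStep hK F (2 * j + 1) =
      eqToHom (subdivideObj_two_mul hK F j) ≫ F.map (homOfLE (j.le_add_right 1)) ≫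
        eqToHom (subdivideObj_two_mul hK F (j + 1)).symm := by
  rw [subdivideStep_two_mul, subdivideStep_two_mul_add_one]
  simp only [Category.assoc, eqToHom_trans_assoc, eqToHom_refl, Category.id_comp]
  rw [reassoc_of% (stepHalving hK F j).fac]

lemma mulFunctor_two_comp_subdivide : mulFunctor 2 ⋙ subdivide hK F = F := by
  refine Functor.ext_of_map_succ (subdivideObj_two_mul hK F) fun j => ?_
  change (subdivide hK F).map (homOfLE (by omega : 2 * j ≤ 2 * j + 1) ≫
    homOfLE (by omega : 2 * j + 1 ≤ 2 * j + 1 + 1)) = _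
  rw [Functor.map_comp, subdivide_map_succ, subdivide_map_succ]
  exact subdivideStep_two_mul_comp hK F j

lemma subdivide_map_succ_mem (hKi : IsIdealoid K) (k : ℕ)
    (hk : K (F.map (homOfLE ((k / 2).le_add_right 1)))) :
    K ((subdivide hK F).map (homOfLE (k.le_add_right 1))) := by
  rw [subdivide_map_succ, subdivideStep]
  split_ifs
  · exact hKi _ _ _ ((stepHalving hK F _).mem hk).1
  · exact hKi _ _ _ ((stepHalving hK F _).mem hk).2

def chainOfHom {X Y : C} (f : X ⟶ Y) : ℕ ⥤ C :=
  Functor.ofSequence (X := fun n => match n with | 0 => X | _ + 1 => Y)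
    fun n => match n with | 0 => f | _ + 1 => 𝟙 Y

noncomputable def dyadicChain {X Y : C} (f : X ⟶ Y) : ℕ → ℕ ⥤ C
  | 0 => chainOfHom f
  | n + 1 => subdivide hK (dyadicChain f n)

lemma mulFunctor_two_comp_dyadicChain {X Y : C} (f : X ⟶ Y) (n : ℕ) :
    mulFunctor 2 ⋙ dyadicChain hK f (n + 1) = dyadicChain hK f n :=
  mulFunctor_two_comp_subdivide hK _

lemma dyadicChain_map_succ_mem (hKi : IsIdealoid K) {X Y : C} {f : X ⟶ Y} (hf : K f) (n : ℕ) :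
    ∀ k < 2 ^ n, K ((dyadicChain hK f n).map (homOfLE (k.le_add_right 1))) := by
  induction n with
  | zero =>
    intro k hk
    obtain rfl : k = 0 := by omega
    exact hf
  | succ n ih =>
    intro k hk
    exact subdivide_map_succ_mem hK _ hKi k (ih _ (by rw [pow_succ] at hk; omega))

end Subdivide

section Glue

variable (F : ℕ → ℕ ⥤ C) (hF : ∀ n, mulFunctor 2 ⋙ F (n + 1) = F n)

include hF in
lemma mulFunctor_two_pow_comp (n j : ℕ) : mulFunctor (2 ^ j) ⋙ F (n + j) = F n := by
  induction j with
  | zero => rw [pow_zero, mulFunctor_one]; rfl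
  | succ j ih => rw [pow_succ, mulFunctor_mul, Functor.assoc, ← Nat.add_assoc, hF, ih]

include hF in
lemma obj_eq_obj_numAt (p : DyadicFrac) {L : ℕ} (h : p.level ≤ L) :
    (F p.level).obj p.num = (F L).obj (p.numAt L) := by
  obtain ⟨j, rfl⟩ := Nat.exists_eq_add_of_le h
  rw [DyadicFrac.numAt, Nat.add_sub_cancel_left]
  exact (Functor.congr_obj (mulFunctor_two_pow_comp F hF p.level j) p.num).symm

include hF in
lemma map_heq_map_of_le {L L' : ℕ} (hL : L ≤ L') {x y x' y' : ℕ} (h : x ≤ y) (h' : x' ≤ y')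
    (hx : x' = 2 ^ (L' - L) * x) (hy : y' = 2 ^ (L' - L) * y) :
    (F L').map (homOfLE h') ≍ (F L).map (homOfLE h) := by
  obtain ⟨j, rfl⟩ := Nat.exists_eq_add_of_le hL
  rw [Nat.add_sub_cancel_left] at hx hy
  subst hx hy
  exact Functor.hcongr_hom (mulFunctor_two_pow_comp F hF L j) (homOfLE h)

noncomputable def glueMapAt {p q : DyadicFrac} (h : p ≤ q) (L : ℕ) (hp : p.level ≤ L)
    (hq : q.level ≤ L) : (F p.level).obj p.num ⟶ (F q.level).obj q.num :=
  eqToHom (obj_eq_obj_numAt F hF p hp) ≫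
    (F L).map (homOfLE (DyadicFrac.numAt_le_numAt hp hq h)) ≫
    eqToHom (obj_eq_obj_numAt F hF q hq).symm

lemma glueMapAt_heq {p q : DyadicFrac} (h : p ≤ q) (L : ℕ) (hp : p.level ≤ L)
    (hq : q.level ≤ L) :
    glueMapAt F hF h L hp hq ≍ (F L).map (homOfLE (DyadicFrac.numAt_le_numAt hp hq h)) := by
  simp [glueMapAt]

lemma glueMapAt_eq {p q : DyadicFrac} (h : p ≤ q) (L L' : ℕ) (hp : p.level ≤ L)
    (hq : q.level ≤ L) (hp' : p.level ≤ L') (hq' : q.level ≤ L') :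
    glueMapAt F hF h L hp hq = glueMapAt F hF h L' hp' hq' := by
  wlog hL : L ≤ L' generalizing L L'
  · exact (this L' L hp' hq' hp hq (le_of_not_ge hL)).symm
  refine eq_of_heq ((glueMapAt_heq F hF h L hp hq).trans
    (HEq.trans ?_ (glueMapAt_heq F hF h L' hp' hq').symm))
  exact (map_heq_map_of_le F hF hL _ _ (DyadicFrac.numAt_of_le hp hL)
    (DyadicFrac.numAt_of_le hq hL)).symm

noncomputable def glue : DyadicFrac ⥤ C where
  obj p := (F p.level).obj p.num
  map {p q} φ := glueMapAt F hF (leOfHom φ) (max p.level q.level) (le_max_left _ _)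
    (le_max_right _ _)
  map_id p := by
    rw [glueMapAt_eq F hF _ _ p.level _ _ le_rfl le_rfl]
    simp [glueMapAt]
  map_comp {p q r} φ ψ := by
    obtain ⟨L, hp, hq, hr⟩ : ∃ L, p.level ≤ L ∧ q.level ≤ L ∧ r.level ≤ L :=
      ⟨p.level + q.level + r.level, by omega, by omega, by omega⟩
    rw [glueMapAt_eq F hF _ _ L _ _ hp hr, glueMapAt_eq F hF _ _ L _ _ hp hq,
      glueMapAt_eq F hF _ _ L _ _ hq hr]
    simp only [glueMapAt, Category.assoc, eqToHom_trans_assoc, eqToHom_refl, Category.id_comp,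
      ← Functor.map_comp_assoc, homOfLE_comp]

lemma glue_map_eq {p q : DyadicFrac} (h : p ≤ q) (L : ℕ) (hp : p.level ≤ L) (hq : q.level ≤ L) :
    (glue F hF).map (homOfLE h) = glueMapAt F hF h L hp hq :=
  glueMapAt_eq F hF h _ _ (le_max_left _ _) (le_max_right _ _) hp hq

lemma glue_obj_eq_of_val_eq {p q : DyadicFrac} (h : p.val = q.val) :
    (glue F hF).obj p = (glue F hF).obj q := by
  have hp := obj_eq_obj_numAt F hF p (le_max_left p.level q.level)
  have hq := obj_eq_obj_numAt F hF q (le_max_right p.level q.level)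
  rw [DyadicFrac.numAt_eq_of_val_eq (le_max_left _ _) (le_max_right _ _) h] at hp
  exact hp.trans hq.symm

lemma glue_map_heq_of_val_eq {p q p' q' : DyadicFrac} (h : p ≤ q) (h' : p' ≤ q')
    (hp : p.val = p'.val) (hq : q.val = q'.val) :
    (glue F hF).map (homOfLE h) ≍ (glue F hF).map (homOfLE h') := by
  obtain ⟨L, hpL, hqL, hpL', hqL'⟩ :
      ∃ L, p.level ≤ L ∧ q.level ≤ L ∧ p'.level ≤ L ∧ q'.level ≤ L :=
    ⟨p.level + q.level + p'.level + q'.level, by omega, by omega, by omega, by omega⟩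
  rw [glue_map_eq F hF h L hpL hqL, glue_map_eq F hF h' L hpL' hqL']
  refine (glueMapAt_heq ..).trans (HEq.trans ?_ (glueMapAt_heq ..).symm)
  exact Functor.map_homOfLE_heq _ (DyadicFrac.numAt_eq_of_val_eq hpL hpL' hp)
    (DyadicFrac.numAt_eq_of_val_eq hqL hqL' hq) _ _

lemma glue_map_mem {K : MorphismProperty C} (hKi : IsIdealoid K)
    (hFK : ∀ n k l (h : k < l), l ≤ 2 ^ n → K ((F n).map (homOfLE h.le)))
    {p q : DyadicFrac} (h : p < q) (hq : q.num ≤ 2 ^ q.level) :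
    K ((glue F hF).map (homOfLE h.le)) := by
  rw [glue_map_eq F hF h.le _ (le_max_left _ _) (le_max_right _ _)]
  exact hKi _ _ _ (hFK _ _ _ (DyadicFrac.numAt_lt_numAt (le_max_left _ _) (le_max_right _ _) h)
    (DyadicFrac.numAt_le_two_pow (le_max_right _ _) hq))

end Glue

theorem le_refinable {I K : MorphismProperty C} (hKi : IsIdealoid K) (hKs : IsSubdivisible K)
    (hKI : K ≤ I) : K ≤ Refinable I := by
  intro X Y f hf
  obtain ⟨φ, hφ, hφ₀, hφ₁, hφnum⟩ := exists_strictMono_dyadicFrac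
  let G := glue (dyadicChain hKs f) (mulFunctor_two_comp_dyadicChain hKs f)
  have hG : Refinable I (G.map (homOfLE (hφ.monotone qzero_le_qone))) :=
    refinable_map_of_strictMono G hφ (fun a b h => hKI _ (glue_map_mem _ _ hKi
      (fun n _ _ h hl => map_mem_of_map_succ_mem hKi _ (dyadicChain_map_succ_mem hKs hKi hf n) h hl)
      (hφ h) (hφnum b))) rfl rfl _
  have h₀ : (φ qzero).val = (⟨0, 0⟩ : DyadicFrac).val := hφ₀.trans (by simp [DyadicFrac.val])
  have h₁ : (φ qone).val = (⟨0, 1⟩ : DyadicFrac).val := hφ₁.trans (by simp [DyadicFrac.val])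
  have e₀ : G.obj (φ qzero) = X := glue_obj_eq_of_val_eq _ _ h₀
  have e₁ : G.obj (φ qone) = Y := glue_obj_eq_of_val_eq _ _ h₁
  have hGf : G.map (homOfLE (hφ.monotone qzero_le_qone)) ≍ f := by
    refine (glue_map_heq_of_val_eq _ _ _ (show (⟨0, 0⟩ : DyadicFrac) ≤ ⟨0, 1⟩ from
      DyadicFrac.le_def.2 (by norm_num [DyadicFrac.val])) h₀ h₁).trans ?_
    rw [glue_map_eq _ _ _ 0 le_rfl le_rfl]
    exact glueMapAt_heq _ _ _ _ _ _
  rw [(conj_eqToHom_iff_heq _ _ e₀ e₁).2 hGf] at hG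
  simpa using hG.iso_comp_comp (eqToIso e₀.symm) (eqToIso e₁)

end

/-- For any idealoid `I`, the class `J = Refinable I` is the largest subdivisible
subidealoid of `I`: it is an idealoid, subdivisible, contained in `I`, and contains every
subdivisible subidealoid of `I`. -/
theorem largest_subdivisible_subidealoid {C : Type*} [Category C] (I : MorphismProperty C)
    (hI : IsIdealoid I) :
    IsIdealoid (Refinable I) ∧ IsSubdivisible (Refinable I) ∧
      (∀ ⦃X Y : C⦄ (f : X ⟶ Y), Refinable I f → I f) ∧
      (∀ K : MorphismProperty C, IsIdealoid K → IsSubdivisible K →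
        (∀ ⦃X Y : C⦄ (f : X ⟶ Y), K f → I f) →
        ∀ ⦃X Y : C⦄ (f : X ⟶ Y), K f → Refinable I f) :=
  ⟨isIdealoid_refinable hI, isSubdivisible_refinable, refinable_le hI,
    fun _ hKi hKs hKI => le_refinable hKi hKs hKI⟩
end

section
/- A frame R that is a retract of a frame S satisfying continuity (in the sense that the join map Ind(S) → S has a left adjoint frame morphism) is itself continuous: if there are frame morphisms i : R → S and r : S → R with r ∘ i = id, and the join map ⨆ : Ind(S) → S has a left adjoint, then the join map ⨆ : Ind(R) → R has a left adjoint. -/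
/-- An ideal of a frame: a nonempty, downward-closed subset closed under binary joins. -/
def IsIdealSet {R : Type*} [Order.Frame R] (J : Set R) : Prop :=
  J.Nonempty ∧ IsLowerSet J ∧ ∀ a ∈ J, ∀ b ∈ J, a ⊔ b ∈ J

/-- The join map `Ind(R) → R` (from the poset of ideals, ordered by inclusion, to `R`) has a
left adjoint, in the sense of a Galois connection. -/
def JoinHasLeftAdjoint (R : Type*) [Order.Frame R] : Prop :=
  ∃ ℓ : R → Set R, (∀ s : R, IsIdealSet (ℓ s)) ∧
    ∀ (s : R) (J : Set R), IsIdealSet J → (ℓ s ⊆ J ↔ s ≤ sSup J)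

/-- A retract (in the category of frames) of a continuous frame is continuous: if
`i : R → S` and `r : S → R` are frame morphisms with `r ∘ i = id` and the join map
`Ind(S) → S` has a left adjoint, then the join map `Ind(R) → R` has a left adjoint. -/
theorem retract_of_continuous_frame {R S : Type*} [Order.Frame R] [Order.Frame S]
    (i : FrameHom R S) (r : FrameHom S R) (hretract : ∀ x : R, r (i x) = x)
    (hS : JoinHasLeftAdjoint S) : JoinHasLeftAdjoint R := by
  obtain ⟨ℓ, hℓideal, hℓadj⟩ := hS
  refine ⟨fun s => {x : R | ∃ a ∈ ℓ (i s), x ≤ r a}, ?_, ?_⟩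
  · intro s
    obtain ⟨⟨a, ha⟩, hlow, hjoin⟩ := hℓideal (i s)
    refine ⟨⟨r a, a, ha, le_rfl⟩, ?_, ?_⟩
    · rintro x y hxy ⟨a, ha, hya⟩
      exact ⟨a, ha, hxy.trans hya⟩
    · rintro x ⟨a, ha, hxa⟩ y ⟨b, hb, hyb⟩
      exact ⟨a ⊔ b, hjoin a ha b hb, by simpa [map_sup] using sup_le_sup hxa hyb⟩
  · intro s J hJ
    obtain ⟨⟨j0, hj0⟩, hJlow, hJjoin⟩ := hJ
    have hbot : (⊥ : R) ∈ J := hJlow bot_le hj0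
    have hpre : IsIdealSet (r ⁻¹' J) := by
      refine ⟨⟨⊥, ?_⟩, fun a b hba ha => hJlow (OrderHomClass.mono r hba) ha,
        fun a ha b hb => ?_⟩
      · simpa using hbot
      · simpa [map_sup] using hJjoin _ ha _ hb
    have key := hℓadj (i s) (r ⁻¹' J) hpre
    constructor
    · intro hsub
      have h1 : ℓ (i s) ⊆ r ⁻¹' J := fun a ha => hsub ⟨a, ha, le_rfl⟩
      have h2 : i s ≤ sSup (r ⁻¹' J) := key.mp h1
      calc s = r (i s) := (hretract s).symm
        _ ≤ r (sSup (r ⁻¹' J)) := OrderHomClass.mono r h2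
        _ = sSup (r '' (r ⁻¹' J)) := by rw [map_sSup, sSup_image]
        _ ≤ sSup J := sSup_le_sSup (Set.image_preimage_subset r J)
    · intro hs
      have hsubJ : i '' J ⊆ r ⁻¹' J := by
        rintro _ ⟨a, ha, rfl⟩
        simpa [hretract a] using ha
      have h1 : i s ≤ sSup (r ⁻¹' J) := by
        calc i s ≤ i (sSup J) := OrderHomClass.mono i hs
          _ = sSup (i '' J) := by rw [map_sSup, sSup_image]
          _ ≤ sSup (r ⁻¹' J) := sSup_le_sSup hsubJ
      rintro x ⟨a, ha, hxa⟩
      exact hJlow hxa (key.mpr h1 ha)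
end

section
/- Let E be an idempotent algebra in a symmetric monoidal stable (or additive with duals) category C whose underlying object is dualizable. Then E is canonically self-dual: the natural E-module structure on the dual E^∨ yields an equivalence E^∨ ≃ E^∨ ⊗ E, and dualizing gives E ≃ E^∨. -/
/-!
Over an idempotent monoid `E` (one with `μ` invertible, so that `μ⁻¹ = λ⁻¹ ≫ η ▷ E`), every unital
right action `a : M ⊗ E ⟶ M` satisfies `a ▷ E = α ≫ M ◁ μ`, and hence is inverse to `M ◁ η`.
The dual `Eᘁ` carries such an action, `ξ · y = ξ(y ·)`, so `Eᘁ ≅ Eᘁ ⊗ E`. In a braided category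
`E` is also a dual of `Eᘁ`, so `Eᘁ ⊗ E` is its own dual; transporting along `Eᘁ ≅ Eᘁ ⊗ E`, `Eᘁ` is
its own dual, and uniqueness of duals gives `E ≅ Eᘁ`.
-/

open CategoryTheory MonoidalCategory MonObj

namespace CategoryTheory

variable {C : Type*} [Category C] [MonoidalCategory C]

namespace MonObj

section Idempotent

variable {E : C} [MonObj E] [IsIso μ[E]]

theorem inv_mul_eq_leftUnitor_inv_comp_one_whiskerRight :
    inv μ[E] = (λ_ E).inv ≫ η ▷ E :=
  IsIso.inv_eq_of_inv_hom_id (by simp)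

theorem whiskerRight_eq_of_unital {M : C} (a : M ⊗ E ⟶ M) (ha : M ◁ η ≫ a = (ρ_ M).hom) :
    a ▷ E = (α_ M E E).hom ≫ M ◁ μ := by
  have h : M ◁ inv μ[E] ≫ (α_ M E E).inv ≫ a ▷ E = 𝟙 _ := by
    rw [inv_mul_eq_leftUnitor_inv_comp_one_whiskerRight, MonoidalCategory.whiskerLeft_comp,
      Category.assoc, associator_inv_naturality_middle_assoc, ← comp_whiskerRight, ha]
    simp
  rw [← Iso.inv_comp_eq, IsIso.eq_inv_of_hom_inv_id h, inv_whiskerLeft, IsIso.inv_inv]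

def isoTensorOfUnitalAction {M : C} (a : M ⊗ E ⟶ M) (ha : M ◁ η ≫ a = (ρ_ M).hom) :
    M ≅ M ⊗ E where
  hom := (ρ_ M).inv ≫ M ◁ η
  inv := a
  hom_inv_id := by rw [Category.assoc, ha, Iso.inv_hom_id]
  inv_hom_id := by
    rw [rightUnitor_inv_naturality_assoc, ← whisker_exchange, whiskerRight_eq_of_unital a ha,
      associator_naturality_right_assoc, ← whiskerLeft_rightUnitor_inv_assoc,
      ← MonoidalCategory.whiskerLeft_comp, ← MonoidalCategory.whiskerLeft_comp, mul_one,
      Iso.inv_hom_id, MonoidalCategory.whiskerLeft_id]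

end Idempotent

section Dual

variable {E : C} [MonObj E] [HasRightDual E]

/-- `ξ · y = ξ(y ·)`: the multiplication, transposed in both variables. -/
def dualAction : Eᘁ ⊗ E ⟶ Eᘁ :=
  (tensorLeftHomEquiv E E Eᘁ Eᘁ).symm (tensorRightHomEquiv E E Eᘁ E μ)

theorem whiskerLeft_one_dualAction : Eᘁ ◁ η ≫ dualAction = (ρ_ (Eᘁ : C)).hom := by
  rw [dualAction, ← tensorLeftHomEquiv_symm_naturality]
  have h : η ≫ tensorRightHomEquiv E E Eᘁ E μ = η_ E Eᘁ := by
    apply (tensorRightHomEquiv (𝟙_ C) E Eᘁ E).symm.injective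
    rw [tensorRightHomEquiv_symm_naturality, Equiv.symm_apply_apply, one_mul]
    simpa using (tensorRightHomEquiv_symm_coevaluation_comp_whiskerRight (Y' := Eᘁ) (𝟙 E)).symm
  simpa [h] using tensorLeftHomEquiv_symm_coevaluation_comp_whiskerLeft (Y := E) (𝟙 Eᘁ)

def dualIsoDualTensor [IsIso μ[E]] : (Eᘁ : C) ≅ Eᘁ ⊗ E :=
  isoTensorOfUnitalAction dualAction whiskerLeft_one_dualAction

end Dual

end MonObj

open BraidedCategory in
def ExactPairing.isoOfIsoTensor [BraidedCategory C] {X Y : C} [ExactPairing X Y]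
    (i : Y ≅ Y ⊗ X) : X ≅ Y :=
  letI := exactPairing_swap X Y
  rightDualIso (exactPairing_swap X Y) (exactPairingCongr i i)

end CategoryTheory

/-- Let `E` be an idempotent algebra (a monoid object whose multiplication is an
isomorphism) in a symmetric monoidal category, whose underlying object is dualizable
(has a right dual `Eᘁ`).  Then the `E`-module structure on the dual gives an isomorphism
`Eᘁ ≅ Eᘁ ⊗ E`, and `E` is self-dual: `E ≅ Eᘁ`. -/
theorem idempotent_algebra_self_dual {C : Type*} [Category C] [MonoidalCategory C]
    [SymmetricCategory C] (M : Mon C) (hidem : IsIso (MonObj.mul : M.X ⊗ M.X ⟶ M.X)) [HasRightDual M.X] :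
    Nonempty ((M.X)ᘁ ≅ (M.X)ᘁ ⊗ M.X) ∧ Nonempty (M.X ≅ (M.X)ᘁ) :=
  ⟨⟨MonObj.dualIsoDualTensor⟩, ⟨ExactPairing.isoOfIsoTensor MonObj.dualIsoDualTensor⟩⟩
end

section
/- Define x ≺ y (rather below) if there is z with x ⊓ z = ⊥ and y ⊔ z = ⊤. Then in a compact regular frame (compact, and x = ⨆{y | y ≺ x} for all x), the relations ≺ and ≪ on the frame satisfy: x ≺ y implies x ≪ y, and hence regularity implies continuity (x = ⨆{y | y ≪ x}). -/
/-- `p` is way below `q`: every directed subset `D` with `q ≤ sSup D` contains some `d ≥ p`. -/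
def WayBelow {L : Type*} [CompleteLattice L] (p q : L) : Prop :=
  ∀ D : Set L, D.Nonempty → DirectedOn (· ≤ ·) D → q ≤ sSup D → ∃ d ∈ D, p ≤ d

/-- `x` is rather below `y`: there is `z` with `x ⊓ z = ⊥` and `y ⊔ z = ⊤`. -/
def RatherBelow {L : Type*} [Order.Frame L] (x y : L) : Prop :=
  ∃ z : L, x ⊓ z = ⊥ ∧ y ⊔ z = ⊤

/-- In a compact regular frame (⊤ is compact and `x = ⨆ {y | y ≺ x}` for all `x`), the
rather-below relation implies the way-below relation, and hence regularity implies
continuity: `x = ⨆ {y | y ≪ x}` for all `x`. -/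
theorem compact_regular_continuous {R : Type*} [Order.Frame R]
    (hcompact : WayBelow (⊤ : R) ⊤)
    (hreg : ∀ x : R, x = sSup {y | RatherBelow y x}) :
    (∀ x y : R, RatherBelow x y → WayBelow x y) ∧
      (∀ x : R, x = sSup {y | WayBelow y x}) := by
  have main : ∀ x y : R, RatherBelow x y → WayBelow x y := by
    rintro x y ⟨z, hxz, hyz⟩ D hne hdir hle
    obtain ⟨d', hd', htop⟩ := hcompact ((· ⊔ z) '' D) (hne.image _)
      (by
        rintro _ ⟨a, ha, rfl⟩ _ ⟨b, hb, rfl⟩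
        obtain ⟨c, hc, hac, hbc⟩ := hdir a ha b hb
        exact ⟨c ⊔ z, ⟨c, hc, rfl⟩, sup_le_sup_right hac z, sup_le_sup_right hbc z⟩)
      (by
        rw [sSup_image]
        calc (⊤ : R) = y ⊔ z := hyz.symm
        _ ≤ sSup D ⊔ z := sup_le_sup_right hle z
        _ ≤ ⨆ d ∈ D, d ⊔ z := by
            apply sup_le
            · exact sSup_le fun d hd => le_trans le_sup_left (le_iSup₂_of_le d hd le_rfl)
            · obtain ⟨d, hd⟩ := hne
              exact le_iSup₂_of_le d hd le_sup_right
        )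
    obtain ⟨d, hd, rfl⟩ := hd'
    simp only [] at htop
    refine ⟨d, hd, ?_⟩
    have : x = x ⊓ (d ⊔ z) := by rw [top_le_iff.mp htop, inf_top_eq]
    rw [this, inf_sup_left, hxz, sup_bot_eq]
    exact inf_le_right
  refine ⟨main, fun x => le_antisymm ?_ (sSup_le fun y hy => ?_)⟩
  · calc x = sSup {y | RatherBelow y x} := hreg x
    _ ≤ sSup {y | WayBelow y x} := sSup_le_sSup fun y hy => main y x hy
  · -- y ≪ x implies y ≤ x: use D = {x}
    obtain ⟨d, hd, hle⟩ := hy {x} ⟨x, rfl⟩ (directedOn_singleton x)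
      (by simp)
    simp only [Set.mem_singleton_iff] at hd
    exact hd ▸ hle
end
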